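/- Let C be a finite set and N ⊆ C a subset with |N| even and |N| ≥ 2, and suppose |C ∖ N| is even. Then, in the sign-assignment game on C, the second player can force the final assignment f to satisfy Σ_{x∈N} f(x) ∈ {2, −2}; in particular, the second player can force Σ_{x∈N} f(x) ≠ 0. -/

import Mathlib

section SignGame

variable {C : Type*} [Fintype C]

/-- A play of the sign-assignment game is a list of moves, each assigning a sign to a
crossing; it is legal if no crossing is chosen twice and every sign is `+1` or `-1`. -/
def LegalPlay (p : List (C × ℤ)) : Prop :=
  (p.map Prod.fst).Nodup ∧ ∀ m ∈ p, m.2 = 1 ∨ m.2 = -1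

/-- The play `p` follows the strategy `σ` of the player who moves at all positions whose
number of prior moves is congruent to `parity` mod 2 (`parity = 0`: first player;
`parity = 1`: second player). -/
def Follows (parity : ℕ) (σ : List (C × ℤ) → C × ℤ) (p : List (C × ℤ)) : Prop :=
  ∀ (i : ℕ) (hi : i < p.length), i % 2 = parity → p.get ⟨i, hi⟩ = σ (p.take i)

/-- The strategy `σ` always produces a legal move (an unchosen crossing with sign `±1`)
at the positions where its player is to move. -/
def LegalStrat (parity : ℕ) (σ : List (C × ℤ) → C × ℤ) : Prop :=
  ∀ p : List (C × ℤ), LegalPlay p → p.length % 2 = parity → p.length < Fintype.card C →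
    (σ p).1 ∉ p.map Prod.fst ∧ ((σ p).2 = 1 ∨ (σ p).2 = -1)

/-- The player moving at positions of parity `parity` can force the predicate `P` on
complete plays: they have a legal strategy such that every complete legal play following
it satisfies `P`. -/
def CanForce (parity : ℕ) (P : List (C × ℤ) → Prop) : Prop :=
  ∃ σ : List (C × ℤ) → C × ℤ, LegalStrat parity σ ∧
    ∀ p : List (C × ℤ), LegalPlay p → p.length = Fintype.card C → Follows parity σ p → P p

end SignGame

/-- The crossings of the resolution game on syllable sizes `n = (n_1, …, n_k)`:
pairs `(i, j)` with `i` a syllable index and `j < n_i`. -/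
abbrev Cr (n : List ℕ) : Type := Σ i : Fin n.length, Fin (n.get i)

/-- The resulting word `(s_1, …, s_k)` of a complete play of the resolution game:
`s_i` is the sum of the signs assigned to the crossings of the `i`-th syllable. -/
def result (n : List ℕ) (p : List (Cr n × ℤ)) : List ℤ :=
  (List.finRange n.length).map fun i =>
    ((p.filter fun m => decide (m.1.1 = i)).map Prod.snd).sum

/-- Twice the linking number of the final diagram: the sum of the signs assigned to the
crossings in the set `N` of non-self-intersections. -/
def nsiSum {C : Type*} [DecidableEq C] (N : Finset C) (p : List (C × ℤ)) : ℤ :=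
  ((p.filter fun m => decide (m.1 ∈ N)).map Prod.snd).sum

/-!
The second player pairs up the crossings by a fixed-point-free involution `ι` that maps `N`
to itself (possible since `|N|` and `|C ∖ N|` are even) and answers every move at `x` by a
move at `ι x`. On one distinguished pair `{a, ι a} ⊆ N` it copies the opponent's sign and on
every other pair it plays the opposite sign, so each pair in `N` other than `{a, ι a}`
contributes `0` to `Σ_{x ∈ N} f(x)`, while `{a, ι a}` contributes `±2`.
-/

open Function

theorem exists_involutive_perm_of_even_card {α : Type*} [Fintype α]
    (h : Even (Fintype.card α)) : ∃ f : Equiv.Perm α, Involutive f ∧ ∀ x, f x ≠ x := by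
  obtain ⟨k, hk⟩ := h
  let e : Fin k × Bool ≃ α :=
    (Equiv.prodCongr (Equiv.refl _) finTwoEquiv.symm).trans <|
      finProdFinEquiv.trans ((finCongr (by omega)).trans (Fintype.equivFin α).symm)
  have hflip : Involutive (Prod.map id not : Fin k × Bool → Fin k × Bool) :=
    fun y => Prod.ext rfl (Bool.not_not _)
  refine ⟨e.permCongr (hflip.toPerm _), fun x => ?_, fun x hx => ?_⟩
  · simp only [Equiv.permCongr_apply, Involutive.coe_toPerm, Equiv.symm_apply_apply, hflip _,
      Equiv.apply_symm_apply]
  · rw [Equiv.permCongr_apply, ← Equiv.eq_symm_apply, Involutive.coe_toPerm] at hx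
    simpa using congrArg Prod.snd hx

theorem Finset.exists_involutive_perm_mem_iff {α : Type*} [Fintype α] [DecidableEq α]
    (S : Finset α) (hS : Even S.card) (hSc : Even Sᶜ.card) :
    ∃ f : Equiv.Perm α, Involutive f ∧ (∀ x, f x ≠ x) ∧ ∀ x, f x ∈ S ↔ x ∈ S := by
  obtain ⟨f, hf, hf'⟩ := exists_involutive_perm_of_even_card (α := {x // x ∈ S}) (by simpa)
  obtain ⟨g, hg, hg'⟩ := exists_involutive_perm_of_even_card (α := {x // x ∉ S})
    (by simpa [Finset.card_compl] using hSc)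
  refine ⟨f.subtypeCongr g, fun x => ?_, fun x => ?_, fun x => ?_⟩ <;> by_cases hx : x ∈ S
  · rw [Equiv.Perm.subtypeCongr.left_apply _ _ hx,
      Equiv.Perm.subtypeCongr.left_apply_subtype, hf]
  · rw [Equiv.Perm.subtypeCongr.right_apply _ _ hx,
      Equiv.Perm.subtypeCongr.right_apply_subtype, hg]
  · rw [Equiv.Perm.subtypeCongr.left_apply _ _ hx]
    exact fun h => hf' ⟨x, hx⟩ (Subtype.ext h)
  · rw [Equiv.Perm.subtypeCongr.right_apply _ _ hx]
    exact fun h => hg' ⟨x, hx⟩ (Subtype.ext h)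
  · simp [Equiv.Perm.subtypeCongr.left_apply _ _ hx, hx]
  · simpa [Equiv.Perm.subtypeCongr.right_apply _ _ hx, hx] using (g ⟨x, hx⟩).2

namespace List

theorem exists_notMem_of_length_lt_card {α : Type*} [Fintype α] {l : List α}
    (h : l.length < Fintype.card α) : ∃ x, x ∉ l := by
  classical
  by_contra! hl
  have hcard := (Finset.card_le_card fun x (_ : x ∈ Finset.univ) =>
    List.mem_toFinset.mpr (hl x)).trans (List.toFinset_card_le l)
  rw [Finset.card_univ] at hcard
  omega

theorem Nodup.mem_of_length_eq_card {α : Type*} [Fintype α] {l : List α} (hl : l.Nodup)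
    (h : l.length = Fintype.card α) (x : α) : x ∈ l := by
  classical
  have : l.toFinset = Finset.univ :=
    Finset.eq_univ_of_card _ (by rw [List.toFinset_card_of_nodup hl, h])
  rw [← List.mem_toFinset, this]
  exact Finset.mem_univ x

end List

theorem CanForce.mono {C : Type*} [Fintype C] {parity : ℕ} {P Q : List (C × ℤ) → Prop}
    (h : CanForce parity P) (hPQ : ∀ p, P p → Q p) : CanForce parity Q := by
  obtain ⟨σ, hσ, hP⟩ := h
  exact ⟨σ, hσ, fun p hp hlen hfol => hPQ p (hP p hp hlen hfol)⟩

section PairingStrategy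

variable {C : Type*} (ι : C → C) (reply : C × ℤ → ℤ)

def pairRound (m : C × ℤ) : List (C × ℤ) := [m, (ι m.1, reply m)]

/-- The fallback branches are never taken in a play that follows this strategy for a
fixed-point-free involution `ι`; they only make the strategy legal in every position. -/
noncomputable def pairingStrategy (c₀ : C) (q : List (C × ℤ)) : C × ℤ :=
  open Classical in
  match q.getLast? with
  | some m =>
    if ι m.1 ∉ q.map Prod.fst then (ι m.1, reply m)
    else if h : ∃ y, y ∉ q.map Prod.fst then (h.choose, 1) else (c₀, 1)
  | none => (c₀, 1)

theorem pairingStrategy_of_getLast?_eq {c₀ : C} {q : List (C × ℤ)} {m : C × ℤ}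
    (h : q.getLast? = some m) (hm : ι m.1 ∉ q.map Prod.fst) :
    pairingStrategy ι reply c₀ q = (ι m.1, reply m) := by
  simp [pairingStrategy, h, hm]

theorem legalStrat_pairingStrategy [Fintype C] (c₀ : C)
    (hreply : ∀ m : C × ℤ, m.2 = 1 ∨ m.2 = -1 → reply m = 1 ∨ reply m = -1) :
    LegalStrat 1 (pairingStrategy ι reply c₀) := by
  intro q hq hpar hlen
  obtain ⟨m, hm⟩ : ∃ m, q.getLast? = some m :=
    Option.isSome_iff_exists.mp (List.getLast?_isSome.mpr (by rintro rfl; simp at hpar))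
  by_cases hfree : ι m.1 ∈ q.map Prod.fst
  · have hfresh := List.exists_notMem_of_length_lt_card (l := q.map Prod.fst) (by simpa)
    simp only [pairingStrategy, hm, hfree, not_true_eq_false, if_false, dif_pos hfresh]
    exact ⟨hfresh.choose_spec, by simp⟩
  · rw [pairingStrategy_of_getLast?_eq ι reply hm hfree]
    exact ⟨hfree, hreply m (hq.2 m (List.mem_of_getLast? hm))⟩

theorem map_fst_flatMap_pairRound (ms : List (C × ℤ)) :
    (ms.flatMap (pairRound ι reply)).map Prod.fst = ms.flatMap fun m => [m.1, ι m.1] := by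
  induction ms with
  | nil => rfl
  | cons m ms ih => simp [pairRound, ih]

theorem mem_map_fst_flatMap_pairRound {ms : List (C × ℤ)} {x : C} :
    x ∈ (ms.flatMap (pairRound ι reply)).map Prod.fst ↔ ∃ m ∈ ms, x = m.1 ∨ x = ι m.1 := by
  simp [map_fst_flatMap_pairRound]

theorem apply_mem_map_fst_flatMap_pairRound_iff (hι : Involutive ι) {ms : List (C × ℤ)}
    {x : C} : ι x ∈ (ms.flatMap (pairRound ι reply)).map Prod.fst ↔
      x ∈ (ms.flatMap (pairRound ι reply)).map Prod.fst := by
  simp only [mem_map_fst_flatMap_pairRound, hι.injective.eq_iff, hι.eq_iff]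
  exact exists_congr fun m => and_congr_right fun _ => or_comm

variable {ι reply}

theorem take_add_two_eq_flatMap_pairRound (hι : Involutive ι) (hfix : ∀ x, ι x ≠ x) {c₀ : C}
    {p : List (C × ℤ)} (hp : (p.map Prod.fst).Nodup)
    (hfol : Follows 1 (pairingStrategy ι reply c₀) p) {j : ℕ} (hj : 2 * j + 2 ≤ p.length)
    {ms : List (C × ℤ)} (hms : p.take (2 * j) = ms.flatMap (pairRound ι reply)) :
    p.take (2 * j + 2) = (ms ++ [p[2 * j]]).flatMap (pairRound ι reply) := by
  set m := p[2 * j]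
  have hmove : p.take (2 * j + 1) = p.take (2 * j) ++ [m] := by
    rw [← List.take_concat_get, List.concat_eq_append]
  have hfresh : m.1 ∉ (p.take (2 * j)).map Prod.fst := by
    have hnodup : ((p.take (2 * j + 1)).map Prod.fst).Nodup :=
      (List.map_take ▸ hp.sublist (List.take_sublist _ _))
    rw [hmove, List.map_append, List.nodup_append] at hnodup
    exact fun h => hnodup.2.2 _ h _ (List.mem_singleton_self _) rfl
  have hpartner : ι m.1 ∉ (p.take (2 * j + 1)).map Prod.fst := by
    rw [hmove, List.map_append, List.mem_append, hms,
      apply_mem_map_fst_flatMap_pairRound_iff ι reply hι, ← hms]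
    simp only [List.map_singleton, List.mem_singleton, not_or]
    exact ⟨hfresh, hfix m.1⟩
  have hreply : p[2 * j + 1] = (ι m.1, reply m) :=
    (hfol (2 * j + 1) (by omega) (by omega)).trans
      (pairingStrategy_of_getLast?_eq ι reply (by rw [hmove]; exact List.getLast?_concat) hpartner)
  rw [← List.take_concat_get (by omega), hmove, hreply, hms]
  simp [pairRound]

theorem exists_eq_flatMap_pairRound (hι : Involutive ι) (hfix : ∀ x, ι x ≠ x) {c₀ : C}
    {p : List (C × ℤ)} (hp : (p.map Prod.fst).Nodup)
    (hfol : Follows 1 (pairingStrategy ι reply c₀) p) (heven : Even p.length) :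
    ∃ ms : List (C × ℤ), p = ms.flatMap (pairRound ι reply) := by
  obtain ⟨k, hk⟩ := heven
  suffices ∀ j ≤ k, ∃ ms : List (C × ℤ), p.take (2 * j) = ms.flatMap (pairRound ι reply) by
    obtain ⟨ms, hms⟩ := this k le_rfl
    exact ⟨ms, by rwa [List.take_of_length_le (by omega)] at hms⟩
  intro j hj
  induction j with
  | zero => exact ⟨[], rfl⟩
  | succ j ih =>
    obtain ⟨ms, hms⟩ := ih (by omega)
    exact ⟨_, take_add_two_eq_flatMap_pairRound hι hfix hp hfol (by omega) hms⟩

end PairingStrategy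

section LinkingNumber

variable {C : Type*} [DecidableEq C]

theorem nsiSum_append (N : Finset C) (p q : List (C × ℤ)) :
    nsiSum N (p ++ q) = nsiSum N p + nsiSum N q := by
  simp [nsiSum, List.filter_append]

theorem nsiSum_flatMap (N : Finset C) (f : C × ℤ → List (C × ℤ)) (ms : List (C × ℤ)) :
    nsiSum N (ms.flatMap f) = (ms.map fun m => nsiSum N (f m)).sum := by
  induction ms with
  | nil => rfl
  | cons m ms ih => rw [List.flatMap_cons, nsiSum_append, ih, List.map_cons, List.sum_cons]

def linkingReply (ι : C → C) (a : C) (m : C × ℤ) : ℤ :=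
  if m.1 = a ∨ m.1 = ι a then m.2 else -m.2

variable {N : Finset C} {ι : C → C} {a : C}

theorem nsiSum_pairRound_linkingReply (hN : ∀ x, ι x ∈ N ↔ x ∈ N) (ha : a ∈ N)
    (m : C × ℤ) : nsiSum N (pairRound ι (linkingReply ι a) m) =
      if m.1 = a ∨ m.1 = ι a then 2 * m.2 else 0 := by
  by_cases hm : m.1 ∈ N
  · by_cases hma : m.1 = a ∨ m.1 = ι a
    · simp [nsiSum, pairRound, linkingReply, hm, hN, hma, two_mul]
    · simp [nsiSum, pairRound, linkingReply, hm, hN, hma]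
  · have hma : ¬(m.1 = a ∨ m.1 = ι a) := by
      rintro (h | h) <;> simp_all
    simp [nsiSum, pairRound, hm, hN, hma]

theorem nsiSum_flatMap_pairRound_of_notMem (hι : Involutive ι) (hN : ∀ x, ι x ∈ N ↔ x ∈ N)
    (ha : a ∈ N) {ms : List (C × ℤ)}
    (h : a ∉ (ms.flatMap (pairRound ι (linkingReply ι a))).map Prod.fst) :
    nsiSum N (ms.flatMap (pairRound ι (linkingReply ι a))) = 0 := by
  rw [nsiSum_flatMap]
  refine List.sum_eq_zero fun s hs => ?_
  obtain ⟨m, hm, rfl⟩ := List.mem_map.mp hs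
  rw [nsiSum_pairRound_linkingReply hN ha, if_neg]
  rintro (hma | hma)
  · exact h ((mem_map_fst_flatMap_pairRound ι _).mpr ⟨m, hm, Or.inl hma.symm⟩)
  · exact h ((mem_map_fst_flatMap_pairRound ι _).mpr ⟨m, hm, Or.inr (hι.eq_iff.mpr hma).symm⟩)

theorem exists_nsiSum_flatMap_pairRound_eq (hι : Involutive ι) (hN : ∀ x, ι x ∈ N ↔ x ∈ N)
    (ha : a ∈ N) {ms : List (C × ℤ)}
    (hnodup : ((ms.flatMap (pairRound ι (linkingReply ι a))).map Prod.fst).Nodup)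
    (hmem : a ∈ (ms.flatMap (pairRound ι (linkingReply ι a))).map Prod.fst) :
    ∃ m ∈ ms, nsiSum N (ms.flatMap (pairRound ι (linkingReply ι a))) = 2 * m.2 := by
  obtain ⟨m, hm, ham⟩ := (mem_map_fst_flatMap_pairRound ι _).mp hmem
  obtain ⟨s, t, rfl⟩ := List.append_of_mem hm
  have ham' : m.1 = a ∨ m.1 = ι a := ham.imp Eq.symm fun h => hι.eq_iff.mp h.symm
  have ha_m : a ∈ (pairRound ι (linkingReply ι a) m).map Prod.fst := by
    rcases ham with h | h <;> simp [pairRound, h]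
  rw [List.flatMap_append, List.flatMap_cons, List.map_append, List.map_append,
    List.nodup_append, List.nodup_append] at hnodup
  have has : a ∉ (s.flatMap (pairRound ι (linkingReply ι a))).map Prod.fst :=
    fun h => hnodup.2.2 a h a (List.mem_append_left _ ha_m) rfl
  have hat : a ∉ (t.flatMap (pairRound ι (linkingReply ι a))).map Prod.fst :=
    fun h => hnodup.2.1.2.2 a ha_m a h rfl
  refine ⟨m, List.mem_append_right _ List.mem_cons_self, ?_⟩
  rw [List.flatMap_append, List.flatMap_cons, nsiSum_append, nsiSum_append,
    nsiSum_flatMap_pairRound_of_notMem hι hN ha has,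
    nsiSum_flatMap_pairRound_of_notMem hι hN ha hat, nsiSum_pairRound_linkingReply hN ha,
    if_pos ham', zero_add, add_zero]

theorem canForce_nsiSum_eq_two_or_eq_neg_two [Fintype C] (hι : Involutive ι)
    (hfix : ∀ x, ι x ≠ x) (hN : ∀ x, ι x ∈ N ↔ x ∈ N) (ha : a ∈ N)
    (hcard : Even (Fintype.card C)) :
    CanForce 1 (fun p : List (C × ℤ) => nsiSum N p = 2 ∨ nsiSum N p = -2) := by
  refine ⟨pairingStrategy ι (linkingReply ι a) a, legalStrat_pairingStrategy _ _ _ ?_,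
    fun p hp hlen hfol => ?_⟩
  · intro m hm
    unfold linkingReply
    split_ifs <;> omega
  obtain ⟨ms, rfl⟩ := exists_eq_flatMap_pairRound hι hfix hp.1 hfol (hlen ▸ hcard)
  obtain ⟨m, hm, hsum⟩ := exists_nsiSum_flatMap_pairRound_eq hι hN ha hp.1
    (hp.1.mem_of_length_eq_card (by rwa [List.length_map]) a)
  have hsign := hp.2 m (List.mem_flatMap.mpr ⟨m, hm, List.mem_cons_self⟩)
  omega

end LinkingNumber

/-- in the sign-assignment game on a finite set `C` with `N ⊆ C`,
`|N|` even, `|N| ≥ 2` and `|C ∖ N|` even, the second player can force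
`Σ_{x ∈ N} f(x) ∈ {2, -2}`; in particular the second player can force
`Σ_{x ∈ N} f(x) ≠ 0`. -/
theorem second_forces_nonzero_linking {C : Type*} [Fintype C] [DecidableEq C]
    (N : Finset C) (hEven : Even N.card) (h2 : 2 ≤ N.card)
    (hcompl : Even Nᶜ.card) :
    CanForce 1 (fun p : List (C × ℤ) => nsiSum N p = 2 ∨ nsiSum N p = -2) ∧
    CanForce 1 (fun p : List (C × ℤ) => nsiSum N p ≠ 0) := by
  obtain ⟨ι, hι, hfix, hN⟩ := N.exists_involutive_perm_mem_iff hEven hcompl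
  obtain ⟨a, ha⟩ : N.Nonempty := Finset.card_pos.mp (by omega)
  have hcard : Even (Fintype.card C) := N.card_add_card_compl ▸ hEven.add hcompl
  have hforce := canForce_nsiSum_eq_two_or_eq_neg_two hι hfix hN ha hcard
  exact ⟨hforce, hforce.mono fun p h => by omega⟩
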